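/- Let p = (z, t) ∈ ℂ × ℝ satisfy |z|⁴ + t² = 1 and d(p, (1,0)) = 1, where d is the Korányi distance, and let j₁(p) = (conj(z), −t) be its antipodal point. Then 33 − 12√6 ≤ d(p, j₁(p))⁴ ≤ 15/4; equivalently (2√6 − 3)^(1/2) ≤ d(p, j₁(p)) ≤ (15/4)^(1/4). In particular d(p, j₁(p)) > 1. -/

import Mathlib

open Complex Real

/-- The Korányi (Heisenberg) distance on ℂ × ℝ. -/
noncomputable def kd (p q : ℂ × ℝ) : ℝ :=
  (‖p.1 - q.1‖ ^ 4 +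
    (p.2 - q.2 + 2 * (p.1 * (starRingEnd ℂ) q.1).im) ^ 2) ^ ((1 : ℝ) / 4)

/-!
Write `z = x + iy` and `r = |z|² = x² + y²`. Subtracting the two defining equations of the curve
gives `4yt = 4x(1+r) - 6r - 1`; using it, `d(p, j₁ p)⁴ = 16y⁴ + (2t + 4xy)²` becomes
`3 + 12(r - x)² + (2x - 1)²`, and squaring it eliminates `y` and `t`, leaving the relation
`(1+r)(8x - 6r - 1)² = (1-r)(20r - 4r² - 1)` between `r ∈ [0,1]` and `x`.
Both bounds then follow from explicit factorisations modulo this relation; for the lower one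
the relation also forces `20r - 4r² - 1 ≥ 0`, i.e. `2r ≥ 5 - 2√6`.
-/

lemma rpow_one_div_four_pow_four {a : ℝ} (ha : 0 ≤ a) : (a ^ ((1 : ℝ) / 4)) ^ 4 = a := by
  rw [one_div, ← Nat.cast_ofNat, Real.rpow_inv_natCast_pow ha (by norm_num)]

lemma kd_nonneg (p q : ℂ × ℝ) : 0 ≤ kd p q := by
  unfold kd
  positivity

lemma kd_pow_four (p q : ℂ × ℝ) :
    kd p q ^ 4 = ‖p.1 - q.1‖ ^ 4 + (p.2 - q.2 + 2 * (p.1 * (starRingEnd ℂ) q.1).im) ^ 2 :=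
  rpow_one_div_four_pow_four (by positivity)

lemma Complex.norm_pow_four (w : ℂ) : ‖w‖ ^ 4 = (w.re ^ 2 + w.im ^ 2) ^ 2 := by
  rw [show ‖w‖ ^ 4 = (‖w‖ ^ 2) ^ 2 by ring, Complex.sq_norm, Complex.normSq_apply]
  ring

lemma kd_one_zero_pow_four (z : ℂ) (t : ℝ) :
    kd (z, t) (1, 0) ^ 4 = ((z.re - 1) ^ 2 + z.im ^ 2) ^ 2 + (t + 2 * z.im) ^ 2 := by
  rw [kd_pow_four, Complex.norm_pow_four]
  simp

lemma kd_conj_neg_pow_four (z : ℂ) (t : ℝ) :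
    kd (z, t) ((starRingEnd ℂ) z, -t) ^ 4 = 16 * z.im ^ 4 + (2 * t + 4 * z.re * z.im) ^ 2 := by
  rw [kd_pow_four, Complex.norm_pow_four]
  simp only [sub_re, conj_re, sub_self, sub_im, conj_im, sub_neg_eq_add, mul_im]
  ring

section Coordinates

variable {x y t : ℝ}

lemma four_mul_mul_eq_of_spheres (hA : (x ^ 2 + y ^ 2) ^ 2 + t ^ 2 = 1)
    (hB : ((x - 1) ^ 2 + y ^ 2) ^ 2 + (t + 2 * y) ^ 2 = 1) :
    4 * y * t = 4 * x * (1 + (x ^ 2 + y ^ 2)) - 6 * (x ^ 2 + y ^ 2) - 1 := by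
  linear_combination hB - hA

lemma antipodal_quartic_eq (hA : (x ^ 2 + y ^ 2) ^ 2 + t ^ 2 = 1)
    (hS : 4 * y * t = 4 * x * (1 + (x ^ 2 + y ^ 2)) - 6 * (x ^ 2 + y ^ 2) - 1) :
    16 * y ^ 4 + (2 * t + 4 * x * y) ^ 2 = 3 + 12 * (x ^ 2 + y ^ 2 - x) ^ 2 + (2 * x - 1) ^ 2 := by
  linear_combination 4 * hA + 4 * x * hS

lemma one_add_mul_sq_eq_one_sub_mul (hA : (x ^ 2 + y ^ 2) ^ 2 + t ^ 2 = 1)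
    (hS : 4 * y * t = 4 * x * (1 + (x ^ 2 + y ^ 2)) - 6 * (x ^ 2 + y ^ 2) - 1) :
    (1 + (x ^ 2 + y ^ 2)) * (8 * x - 6 * (x ^ 2 + y ^ 2) - 1) ^ 2 =
      (1 - (x ^ 2 + y ^ 2)) * (20 * (x ^ 2 + y ^ 2) - 4 * (x ^ 2 + y ^ 2) ^ 2 - 1) := by
  linear_combination
    (-2) * (4 * y * t + 4 * x * (1 + (x ^ 2 + y ^ 2)) - 6 * (x ^ 2 + y ^ 2) - 1) * hS
      + 32 * y ^ 2 * hA

end Coordinates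

section CurveRelation

variable {r x : ℝ}

lemma five_sub_two_sqrt_six_le (hr0 : 0 ≤ r) (hr1 : r ≤ 1)
    (hW : (1 + r) * (8 * x - 6 * r - 1) ^ 2 = (1 - r) * (20 * r - 4 * r ^ 2 - 1)) :
    5 - 2 * √6 ≤ 2 * r := by
  have hs : √6 ^ 2 = 6 := Real.sq_sqrt (by norm_num)
  have hs2 : 2 ≤ √6 := by nlinarith [Real.sqrt_nonneg 6]
  by_contra! hlt
  -- `20r - 4r² - 1 = -(5 - 2r - 2√6)(5 - 2r + 2√6)` is negative below its smaller root.
  have hneg : 20 * r - 4 * r ^ 2 - 1 < 0 := by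
    nlinarith [mul_pos (sub_pos.2 hlt) (by linarith : 0 < 5 - 2 * r + 2 * √6)]
  have hrhs : (1 - r) * (20 * r - 4 * r ^ 2 - 1) < 0 :=
    mul_neg_of_pos_of_neg (by linarith) hneg
  have hlhs : 0 ≤ (1 + r) * (8 * x - 6 * r - 1) ^ 2 := mul_nonneg (by linarith) (sq_nonneg _)
  linarith

lemma antipodal_quartic_le (hr0 : 0 ≤ r) (hr1 : r ≤ 1)
    (hW : (1 + r) * (8 * x - 6 * r - 1) ^ 2 = (1 - r) * (20 * r - 4 * r ^ 2 - 1)) :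
    3 + 12 * (r - x) ^ 2 + (2 * x - 1) ^ 2 ≤ 15 / 4 := by
  have key : (1 + r) * (15 / 4 - (3 + 12 * (r - x) ^ 2 + (2 * x - 1) ^ 2)) =
      (1 - r) * (4 * r - 1) ^ 2 / 4 := by
    linear_combination (-1 / 4) * hW
  have hnn : 0 ≤ (1 - r) * (4 * r - 1) ^ 2 / 4 := by
    have : 0 ≤ 1 - r := by linarith
    positivity
  rw [← key] at hnn
  linarith [(mul_nonneg_iff_of_pos_left (by linarith : 0 < 1 + r)).mp hnn]

lemma le_antipodal_quartic (hr0 : 0 ≤ r) (hr1 : r ≤ 1)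
    (hW : (1 + r) * (8 * x - 6 * r - 1) ^ 2 = (1 - r) * (20 * r - 4 * r ^ 2 - 1)) :
    33 - 12 * √6 ≤ 3 + 12 * (r - x) ^ 2 + (2 * x - 1) ^ 2 := by
  have hs : √6 ^ 2 = 6 := Real.sq_sqrt (by norm_num)
  have key : 4 * (1 + r) * (3 + 12 * (r - x) ^ 2 + (2 * x - 1) ^ 2 - (33 - 12 * √6)) =
      2 * (2 * r + 1 - √6) ^ 2 * (2 * r - 5 + 2 * √6) := by
    linear_combination hW - 2 * (2 * √6 - 6 * r - 9) * hs
  have hnn : 0 ≤ 2 * (2 * r + 1 - √6) ^ 2 * (2 * r - 5 + 2 * √6) := by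
    have : 0 ≤ 2 * r - 5 + 2 * √6 := by linarith [five_sub_two_sqrt_six_le hr0 hr1 hW]
    positivity
  rw [← key] at hnn
  linarith [(mul_nonneg_iff_of_pos_left (by linarith : 0 < 4 * (1 + r))).mp hnn]

end CurveRelation

lemma sqrt_two_mul_sqrt_six_sub_three_pow_four : √(2 * √6 - 3) ^ 4 = 33 - 12 * √6 := by
  have hs : √6 ^ 2 = 6 := Real.sq_sqrt (by norm_num)
  have hpos : 0 ≤ 2 * √6 - 3 := by nlinarith [Real.sqrt_nonneg 6]
  rw [show √(2 * √6 - 3) ^ 4 = (√(2 * √6 - 3) ^ 2) ^ 2 by ring, Real.sq_sqrt hpos]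
  linear_combination 4 * hs

theorem antipodal_distance_bounds (z : ℂ) (t : ℝ)
    (hsph : ‖z‖ ^ 4 + t ^ 2 = 1)
    (hd : kd (z, t) ((1 : ℂ), (0 : ℝ)) = 1) :
    (33 - 12 * Real.sqrt 6 ≤ (kd (z, t) ((starRingEnd ℂ) z, -t)) ^ 4 ∧
      (kd (z, t) ((starRingEnd ℂ) z, -t)) ^ 4 ≤ 15 / 4) ∧
    ((2 * Real.sqrt 6 - 3) ^ ((1 : ℝ) / 2) ≤ kd (z, t) ((starRingEnd ℂ) z, -t) ∧
      kd (z, t) ((starRingEnd ℂ) z, -t) ≤ (15 / 4 : ℝ) ^ ((1 : ℝ) / 4)) ∧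
    1 < kd (z, t) ((starRingEnd ℂ) z, -t) := by
  have hA : (z.re ^ 2 + z.im ^ 2) ^ 2 + t ^ 2 = 1 := by rwa [← Complex.norm_pow_four]
  have hB : ((z.re - 1) ^ 2 + z.im ^ 2) ^ 2 + (t + 2 * z.im) ^ 2 = 1 := by
    rw [← kd_one_zero_pow_four, hd, one_pow]
  have hS := four_mul_mul_eq_of_spheres hA hB
  have hW := one_add_mul_sq_eq_one_sub_mul hA hS
  have hr0 : 0 ≤ z.re ^ 2 + z.im ^ 2 := by positivity
  have hr1 : z.re ^ 2 + z.im ^ 2 ≤ 1 := by nlinarith [sq_nonneg t]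
  have hd4 := (kd_conj_neg_pow_four z t).trans (antipodal_quartic_eq hA hS)
  have hlow := hd4 ▸ le_antipodal_quartic hr0 hr1 hW
  have hup := hd4 ▸ antipodal_quartic_le hr0 hr1 hW
  have hd0 := kd_nonneg (z, t) ((starRingEnd ℂ) z, -t)
  refine ⟨⟨hlow, hup⟩, ⟨?_, ?_⟩, ?_⟩
  · rw [← Real.sqrt_eq_rpow]
    exact le_of_pow_le_pow_left₀ four_ne_zero hd0
      (sqrt_two_mul_sqrt_six_sub_three_pow_four ▸ hlow)
  · exact le_of_pow_le_pow_left₀ four_ne_zero (by positivity)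
      ((rpow_one_div_four_pow_four (by norm_num : (0 : ℝ) ≤ 15 / 4)).symm ▸ hup)
  · have hsqrt : √6 < 8 / 3 := by rw [Real.sqrt_lt' (by norm_num)]; norm_num
    exact lt_of_pow_lt_pow_left₀ 4 hd0 (by linarith)
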